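/- arXiv:2605.25085 — 3 statements merged into one kernel-verified Lean document; each statement's English description precedes it below -/
import Mathlib

section
/- Let p and q be probability mass functions on a finite type V, and suppose q(x) ≥ ε_min for every x ∈ V, where ε_min > 0. If TV(p, q) ≤ ε_min/2, then KL(p‖q) ≤ (2/ε_min)·TV(p, q)². -/
open Finset

/-- Total variation distance between two pmfs on a finite type. -/
noncomputable def TV {V : Type*} [Fintype V] (p q : V → ℝ) : ℝ :=
  (1 / 2) * ∑ x, |p x - q x|

/-- Kullback–Leibler divergence between two pmfs on a finite type. -/
noncomputable def KL {V : Type*} [Fintype V] (p q : V → ℝ) : ℝ :=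
  ∑ x, p x * Real.log (p x / q x)

/-!
`log t ≤ t - 1` bounds `KL(p‖q)` by the χ²-divergence `∑ (p - q)² / q`. Since `p - q` sums to
zero, every single `|p x - q x|` is at most `TV(p, q)`, so with `q ≥ ε` each term satisfies
`(p x - q x)² / q x ≤ TV(p, q) · |p x - q x| / ε`; summing gives `χ² ≤ 2 TV(p, q)² / ε`.
-/

noncomputable def chiSq {V : Type*} [Fintype V] (p q : V → ℝ) : ℝ :=
  ∑ x, (p x - q x) ^ 2 / q x

section

variable {V : Type*} [Fintype V]

theorem two_mul_abs_le_sum_abs_of_sum_eq_zero {d : V → ℝ} (hd : ∑ y, d y = 0) (x : V) :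
    2 * |d x| ≤ ∑ y, |d y| := by
  classical
  have hrest : ∑ y ∈ univ.erase x, d y = -d x := by
    rw [eq_neg_iff_add_eq_zero, sum_erase_add _ _ (mem_univ x), hd]
  calc 2 * |d x| = |d x| + |∑ y ∈ univ.erase x, d y| := by rw [hrest, abs_neg]; ring
    _ ≤ |d x| + ∑ y ∈ univ.erase x, |d y| := by gcongr; exact abs_sum_le_sum_abs _ _
    _ = ∑ y, |d y| := add_sum_erase _ (fun y ↦ |d y|) (mem_univ x)

theorem abs_sub_le_TV {p q : V → ℝ} (hpq : ∑ x, p x = ∑ x, q x) (x : V) :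
    |p x - q x| ≤ TV p q := by
  have hd : ∑ y, (p y - q y) = 0 := by rw [sum_sub_distrib, hpq, sub_self]
  have := two_mul_abs_le_sum_abs_of_sum_eq_zero hd x
  rw [TV]
  linarith

theorem mul_log_div_le {a b : ℝ} (ha : 0 ≤ a) (hb : 0 < b) :
    a * Real.log (a / b) ≤ (a - b) ^ 2 / b + (a - b) := by
  rcases ha.eq_or_lt with rfl | ha
  · rw [zero_mul, zero_sub, neg_sq, sq, mul_div_cancel_right₀ _ hb.ne', add_neg_cancel]
  calc a * Real.log (a / b) ≤ a * (a / b - 1) :=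
        mul_le_mul_of_nonneg_left (Real.log_le_sub_one_of_pos (div_pos ha hb)) ha.le
    _ = (a - b) ^ 2 / b + (a - b) := by field_simp; ring

theorem KL_le_chiSq {p q : V → ℝ} (hp : ∀ x, 0 ≤ p x) (hq : ∀ x, 0 < q x)
    (hpq : ∑ x, p x = ∑ x, q x) : KL p q ≤ chiSq p q := by
  calc KL p q ≤ ∑ x, ((p x - q x) ^ 2 / q x + (p x - q x)) :=
        sum_le_sum fun x _ ↦ mul_log_div_le (hp x) (hq x)
    _ = chiSq p q := by rw [sum_add_distrib, sum_sub_distrib, hpq, sub_self, add_zero, chiSq]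

theorem chiSq_le_of_forall_le {p q : V → ℝ} {ε : ℝ} (hε : 0 < ε) (hq : ∀ x, ε ≤ q x)
    (hpq : ∑ x, p x = ∑ x, q x) : chiSq p q ≤ 2 / ε * TV p q ^ 2 := by
  have hterm : ∀ x, (p x - q x) ^ 2 / q x ≤ TV p q / ε * |p x - q x| := fun x ↦ by
    have hsq : (p x - q x) ^ 2 ≤ TV p q * |p x - q x| := by
      rw [← sq_abs, sq]
      exact mul_le_mul_of_nonneg_right (abs_sub_le_TV hpq x) (abs_nonneg _)
    have hTV_nonneg : 0 ≤ TV p q := (abs_nonneg _).trans (abs_sub_le_TV hpq x)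
    calc (p x - q x) ^ 2 / q x ≤ TV p q * |p x - q x| / ε :=
          div_le_div₀ (by positivity) hsq hε (hq x)
      _ = TV p q / ε * |p x - q x| := by ring
  calc chiSq p q ≤ ∑ x, TV p q / ε * |p x - q x| := sum_le_sum fun x _ ↦ hterm x
    _ = 2 / ε * TV p q ^ 2 := by rw [← mul_sum, TV]; ring

end

theorem kl_tv_bounded_general {V : Type*} [Fintype V] (p q : V → ℝ) (εmin : ℝ)
    (hεmin : 0 < εmin)
    (hp0 : ∀ x, 0 ≤ p x) (hp1 : ∑ x, p x = 1)
    (hq1 : ∑ x, q x = 1)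
    (hfloor : ∀ x, εmin ≤ q x) :
    KL p q ≤ (2 / εmin) * (TV p q) ^ 2 := by
  have hpq : ∑ x, p x = ∑ x, q x := hp1.trans hq1.symm
  calc KL p q ≤ chiSq p q := KL_le_chiSq hp0 (fun x ↦ hεmin.trans_le (hfloor x)) hpq
    _ ≤ 2 / εmin * TV p q ^ 2 := chiSq_le_of_forall_le hεmin hfloor hpq

/-- KL–TV conversion, uniform-floor form: if `q` has floor `εmin` and
`TV(p,q) ≤ εmin/2`, then `KL(p‖q) ≤ (2/εmin)·TV(p,q)²`. -/
theorem kl_tv_bounded {V : Type*} [Fintype V] (p q : V → ℝ) (εmin : ℝ)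
    (hεmin : 0 < εmin)
    (hp0 : ∀ x, 0 ≤ p x) (hp1 : ∑ x, p x = 1)
    (hq0 : ∀ x, 0 ≤ q x) (hq1 : ∑ x, q x = 1)
    (hfloor : ∀ x, εmin ≤ q x)
    (hTV : TV p q ≤ εmin / 2) :
    KL p q ≤ (2 / εmin) * (TV p q) ^ 2 :=
  kl_tv_bounded_general p q εmin hεmin hp0 hp1 hq1 hfloor
end

section
/- Let p and q be probability mass functions on a finite type V of cardinality N, let ε > 0, C ≥ 0, ρ ∈ [0, 1), and let w ≥ 1 be a natural number. If q(x) ≥ ε for all x and |p(x) − q(x)| ≤ C·ρ^w for all x ∈ V, then KL(p‖q) ≤ 2·N·C²·ρ^{2w}/ε. -/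
open Finset

/-- KL form of geometric mixing decay: if `q ≥ ε` pointwise and
`|p(x) − q(x)| ≤ C·ρ^w` for all `x`, then `KL(p‖q) ≤ 2·N·C²·ρ^{2w}/ε`. -/
theorem mixing_KL {V : Type*} [Fintype V] (p q : V → ℝ) (ε C ρ : ℝ) (w : ℕ)
    (hε : 0 < ε) (hC : 0 ≤ C) (hρ0 : 0 ≤ ρ) (hρ1 : ρ < 1) (hw : 1 ≤ w)
    (hp0 : ∀ x, 0 ≤ p x) (hp1 : ∑ x, p x = 1)
    (hq0 : ∀ x, 0 ≤ q x) (hq1 : ∑ x, q x = 1)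
    (hfloor : ∀ x, ε ≤ q x)
    (hmix : ∀ x, |p x - q x| ≤ C * ρ ^ w) :
    KL p q ≤ 2 * (Fintype.card V : ℝ) * C ^ 2 * ρ ^ (2 * w) / ε := by
  have hq : ∀ x, 0 < q x := fun x => lt_of_lt_of_le hε (hfloor x)
  have hterm : ∀ x, p x * Real.log (p x / q x) ≤ (p x - q x) ^ 2 / q x + (p x - q x) := by
    intro x
    rcases eq_or_lt_of_le (hp0 x) with h | h
    · have e : (0 - q x) ^ 2 / q x = q x := by
        rw [zero_sub, neg_sq, sq, mul_div_assoc, div_self (hq x).ne', mul_one]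
      rw [← h, e]
      simp
    · have hlog := Real.log_le_sub_one_of_pos (div_pos h (hq x))
      have h1 : p x * Real.log (p x / q x) ≤ p x * (p x / q x - 1) :=
        mul_le_mul_of_nonneg_left hlog h.le
      have h2 : p x * (p x / q x - 1) = (p x - q x) ^ 2 / q x + (p x - q x) := by
        field_simp [(hq x).ne']
        ring
      linarith
  have hsum : KL p q ≤ ∑ x, (p x - q x) ^ 2 / q x := by
    have := Finset.sum_le_sum (s := Finset.univ) (fun x _ => hterm x)
    have hsplit : ∑ x, ((p x - q x) ^ 2 / q x + (p x - q x))
        = ∑ x, (p x - q x) ^ 2 / q x := by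
      rw [Finset.sum_add_distrib, Finset.sum_sub_distrib, hp1, hq1]
      ring
    unfold KL
    linarith [this, hsplit.ge]
  have hterm2 : ∀ x, (p x - q x) ^ 2 / q x ≤ C ^ 2 * ρ ^ (2 * w) / ε := by
    intro x
    have h1 : (p x - q x) ^ 2 ≤ (C * ρ ^ w) ^ 2 := by
      have := hmix x
      nlinarith [abs_nonneg (p x - q x), sq_abs (p x - q x)]
    have h2 : (C * ρ ^ w) ^ 2 = C ^ 2 * ρ ^ (2 * w) := by
      rw [mul_pow, ← pow_mul, mul_comm w 2]
    calc (p x - q x) ^ 2 / q x ≤ (C * ρ ^ w) ^ 2 / ε :=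
          div_le_div₀ (by positivity) h1 hε (hfloor x)
      _ = C ^ 2 * ρ ^ (2 * w) / ε := by rw [h2]
  have hsum2 : ∑ x, (p x - q x) ^ 2 / q x ≤ (Fintype.card V : ℝ) * (C ^ 2 * ρ ^ (2 * w) / ε) := by
    calc ∑ x, (p x - q x) ^ 2 / q x ≤ ∑ _x : V, C ^ 2 * ρ ^ (2 * w) / ε :=
          Finset.sum_le_sum (fun x _ => hterm2 x)
      _ = (Fintype.card V : ℝ) * (C ^ 2 * ρ ^ (2 * w) / ε) := by
          rw [Finset.sum_const, Fintype.card, nsmul_eq_mul]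
  have hnn : 0 ≤ (Fintype.card V : ℝ) * (C ^ 2 * ρ ^ (2 * w) / ε) := by positivity
  have : 2 * (Fintype.card V : ℝ) * C ^ 2 * ρ ^ (2 * w) / ε
      = 2 * ((Fintype.card V : ℝ) * (C ^ 2 * ρ ^ (2 * w) / ε)) := by ring
  linarith
end

section
/- Let E be a real normed vector space and L ≥ 1 a natural number. For each ℓ ∈ {1, …, L}, let g_ℓ : E → E be Lipschitz with constant L_ℓ ≥ 0, let a_ℓ, â_ℓ ∈ E, and let ε_ℓ > 0. Define sequences h_0 = ĥ_0 ∈ E and recursively h_ℓ = g_ℓ(h_{ℓ−1}) + a_ℓ, ĥ_ℓ = g_ℓ(ĥ_{ℓ−1}) + â_ℓ. Then ‖h_L − ĥ_L‖² ≤ Σ_{ℓ=1}^{L} [ Π_{m=ℓ+1}^{L} (1+ε_m)·L_m² ] · (1 + ε_ℓ^{−1}) · ‖a_ℓ − â_ℓ‖². -/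
/-!
Peter–Paul (Young) splits the error of one layer as
`‖Δ_ℓ‖² ≤ (1 + ε_ℓ) L_ℓ² ‖Δ_{ℓ-1}‖² + (1 + ε_ℓ⁻¹) ‖a_ℓ - â_ℓ‖²`,
and unrolling this linear recursion from `Δ_0 = 0` gives the weighted sum.
-/

open Finset

theorem norm_add_sq_le_one_add_mul {E : Type*} [SeminormedAddCommGroup E] (u v : E) {ε : ℝ}
    (hε : 0 < ε) : ‖u + v‖ ^ 2 ≤ (1 + ε) * ‖u‖ ^ 2 + (1 + ε⁻¹) * ‖v‖ ^ 2 := by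
  have h_tri : ‖u + v‖ ^ 2 ≤ (‖u‖ + ‖v‖) ^ 2 :=
    pow_le_pow_left₀ (norm_nonneg _) (norm_add_le u v) 2
  -- `2 ‖u‖ ‖v‖ ≤ ε ‖u‖² + ε⁻¹ ‖v‖²` is `0 ≤ ε⁻¹ (ε ‖u‖ - ‖v‖)²`.
  have h_cross : 0 ≤ ε⁻¹ * (ε * ‖u‖ - ‖v‖) ^ 2 := by positivity
  have h_expand : ε⁻¹ * (ε * ‖u‖ - ‖v‖) ^ 2 = ε * ‖u‖ ^ 2 - 2 * ‖u‖ * ‖v‖ + ε⁻¹ * ‖v‖ ^ 2 := by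
    field_simp
    ring
  nlinarith

theorem norm_map_add_sub_map_add_sq_le {E : Type*} [SeminormedAddCommGroup E] {f : E → E} {K : ℝ}
    (hf : ∀ x y, ‖f x - f y‖ ≤ K * ‖x - y‖) (x y a b : E) {ε : ℝ} (hε : 0 < ε) :
    ‖(f x + a) - (f y + b)‖ ^ 2 ≤
      (1 + ε) * K ^ 2 * ‖x - y‖ ^ 2 + (1 + ε⁻¹) * ‖a - b‖ ^ 2 := by
  have h_lip : ‖f x - f y‖ ^ 2 ≤ K ^ 2 * ‖x - y‖ ^ 2 := by
    rw [← mul_pow]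
    exact pow_le_pow_left₀ (norm_nonneg _) (hf x y) 2
  calc ‖(f x + a) - (f y + b)‖ ^ 2 = ‖(f x - f y) + (a - b)‖ ^ 2 := by rw [add_sub_add_comm]
    _ ≤ (1 + ε) * ‖f x - f y‖ ^ 2 + (1 + ε⁻¹) * ‖a - b‖ ^ 2 := norm_add_sq_le_one_add_mul _ _ hε
    _ ≤ (1 + ε) * (K ^ 2 * ‖x - y‖ ^ 2) + (1 + ε⁻¹) * ‖a - b‖ ^ 2 := by
      gcongr
    _ = (1 + ε) * K ^ 2 * ‖x - y‖ ^ 2 + (1 + ε⁻¹) * ‖a - b‖ ^ 2 := by ring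

section Unrolling

variable {R : Type*} [CommSemiring R]

theorem sum_Icc_prod_Icc_mul_succ (c d : ℕ → R) (n : ℕ) :
    ∑ ℓ ∈ Icc 1 (n + 1), (∏ m ∈ Icc (ℓ + 1) (n + 1), c m) * d ℓ =
      c (n + 1) * ∑ ℓ ∈ Icc 1 n, (∏ m ∈ Icc (ℓ + 1) n, c m) * d ℓ + d (n + 1) := by
  rw [sum_Icc_succ_top (by omega), Icc_eq_empty_of_lt (Nat.lt_succ_self (n + 1)), prod_empty,
    one_mul, mul_sum]
  congr 1
  refine sum_congr rfl fun ℓ hℓ => ?_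
  rw [prod_Icc_succ_top (by simp at hℓ; omega)]
  ring

variable [PartialOrder R] [IsOrderedRing R]

theorem le_sum_Icc_prod_mul_of_le_mul_add {e c d : ℕ → R} (he₀ : e 0 ≤ 0)
    (hc : ∀ n, 0 ≤ c (n + 1)) (he : ∀ n, e (n + 1) ≤ c (n + 1) * e n + d (n + 1)) (n : ℕ) :
    e n ≤ ∑ ℓ ∈ Icc 1 n, (∏ m ∈ Icc (ℓ + 1) n, c m) * d ℓ := by
  induction n with
  | zero => simpa using he₀
  | succ n ih =>
    rw [sum_Icc_prod_Icc_mul_succ]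
    exact (he n).trans (add_le_add_left (mul_le_mul_of_nonneg_left ih (hc n)) _)

end Unrolling

theorem error_propagation_general {E : Type*} [NormedAddCommGroup E]
    (L : ℕ)
    (g : ℕ → E → E) (Lc : ℕ → ℝ)
    (hg : ∀ ℓ x y, ‖g ℓ x - g ℓ y‖ ≤ Lc ℓ * ‖x - y‖)
    (a ahat : ℕ → E) (ε : ℕ → ℝ) (hε : ∀ ℓ, 0 < ε ℓ)
    (h hhat : ℕ → E) (h0 : h 0 = hhat 0)
    (hrec : ∀ ℓ, h (ℓ + 1) = g (ℓ + 1) (h ℓ) + a (ℓ + 1))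
    (hhatrec : ∀ ℓ, hhat (ℓ + 1) = g (ℓ + 1) (hhat ℓ) + ahat (ℓ + 1)) :
    ‖h L - hhat L‖ ^ 2 ≤
      ∑ ℓ ∈ Finset.Icc 1 L,
        (∏ m ∈ Finset.Icc (ℓ + 1) L, (1 + ε m) * (Lc m) ^ 2) *
          (1 + (ε ℓ)⁻¹) * ‖a ℓ - ahat ℓ‖ ^ 2 := by
  simp only [mul_assoc]
  refine le_sum_Icc_prod_mul_of_le_mul_add (e := fun n => ‖h n - hhat n‖ ^ 2)
    (by simp [h0]) (fun n => by have := hε (n + 1); positivity) (fun n => ?_) L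
  rw [hrec, hhatrec]
  exact norm_map_add_sub_map_add_sq_le (hg (n + 1)) _ _ _ _ (hε (n + 1))

/-- Error propagation through `L` residual layers: with `h_ℓ = g_ℓ(h_{ℓ−1}) + a_ℓ`,
`ĥ_ℓ = g_ℓ(ĥ_{ℓ−1}) + â_ℓ`, `h_0 = ĥ_0`, and each `g_ℓ` Lipschitz with constant `Lc ℓ`,
`‖h_L − ĥ_L‖² ≤ Σ_{ℓ=1}^{L} [Π_{m=ℓ+1}^{L} (1+ε_m)·Lc_m²]·(1+ε_ℓ⁻¹)·‖a_ℓ − â_ℓ‖²`. -/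
theorem error_propagation {E : Type*} [NormedAddCommGroup E] [NormedSpace ℝ E]
    (L : ℕ) (hL : 1 ≤ L)
    (g : ℕ → E → E) (Lc : ℕ → ℝ) (hLc : ∀ ℓ, 0 ≤ Lc ℓ)
    (hg : ∀ ℓ x y, ‖g ℓ x - g ℓ y‖ ≤ Lc ℓ * ‖x - y‖)
    (a ahat : ℕ → E) (ε : ℕ → ℝ) (hε : ∀ ℓ, 0 < ε ℓ)
    (h hhat : ℕ → E) (h0 : h 0 = hhat 0)
    (hrec : ∀ ℓ, h (ℓ + 1) = g (ℓ + 1) (h ℓ) + a (ℓ + 1))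
    (hhatrec : ∀ ℓ, hhat (ℓ + 1) = g (ℓ + 1) (hhat ℓ) + ahat (ℓ + 1)) :
    ‖h L - hhat L‖ ^ 2 ≤
      ∑ ℓ ∈ Finset.Icc 1 L,
        (∏ m ∈ Finset.Icc (ℓ + 1) L, (1 + ε m) * (Lc m) ^ 2) *
          (1 + (ε ℓ)⁻¹) * ‖a ℓ - ahat ℓ‖ ^ 2 :=
  error_propagation_general L g Lc hg a ahat ε hε h hhat h0 hrec hhatrec
end
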